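/- Let F be a tract with involution and 𝓒 a strong orthogonal F-signature of an orthogonal matroid. If X ∈ F^E lies in the orthogonal complement 𝓒^⊥ and has minimal admissible nonzero support in 𝓒^⊥, then X ∈ 𝓒. Conversely every element of 𝓒 is elementary in 𝓒^⊥. Hence Elem(𝓒^⊥) = 𝓒. -/
import Mathlib


open scoped Classical

/-- The ground set `E = [n] ∪ [n]*`: `(i, true)` encodes `i ∈ [n]` and `(i, false)` encodes
`i* ∈ [n]*`. -/
abbrev OE (n : ℕ) := Fin n × Bool

/-- The involution `* : E → E`. -/
def ostar {n : ℕ} (x : OE n) : OE n := (x.1, !x.2)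

/-- The divergence `{x, x*}`. -/
def pairS {n : ℕ} (x : OE n) : Finset (OE n) := {x, ostar x}

/-- `A` is admissible (a subtransversal): `A ∩ A* = ∅`. -/
def IsAdmissible {n : ℕ} (A : Finset (OE n)) : Prop := ∀ x ∈ A, ostar x ∉ A

/-- A transversal: an admissible set of size `n`. -/
def IsTransversal {n : ℕ} (T : Finset (OE n)) : Prop := T.card = n ∧ IsAdmissible T

/-- `𝓑` is the set of bases of an orthogonal matroid on `E = [n] ∪ [n]*`: a nonempty
collection of transversals satisfying the symmetric exchange axiom. -/
def IsOrthoMatroid {n : ℕ} (𝓑 : Set (Finset (OE n))) : Prop :=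
  𝓑.Nonempty ∧ (∀ B ∈ 𝓑, IsTransversal B) ∧
  ∀ B₁ ∈ 𝓑, ∀ B₂ ∈ 𝓑, ∀ x : OE n,
    x ∈ symmDiff B₁ B₂ → ostar x ∈ symmDiff B₁ B₂ →
    ∃ y : OE n, y ∈ symmDiff B₁ B₂ ∧ ostar y ∈ symmDiff B₁ B₂ ∧
      pairS y ≠ pairS x ∧ symmDiff B₁ (pairS x ∪ pairS y) ∈ 𝓑

/-- An admissible set is independent if it is contained in some basis. -/
def IsIndep {n : ℕ} (𝓑 : Set (Finset (OE n))) (I : Finset (OE n)) : Prop := ∃ B ∈ 𝓑, I ⊆ B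

/-- A circuit: a minimal dependent admissible set. -/
def IsCircuit {n : ℕ} (𝓑 : Set (Finset (OE n))) (C : Finset (OE n)) : Prop :=
  IsAdmissible C ∧ ¬ IsIndep 𝓑 C ∧ ∀ D ⊂ C, IsIndep 𝓑 D

/-- A tract structure on a pointed commutative group `F = F^× ∪ {0}`: the null set `N` is a set
of multisets of nonzero elements of `F` (a multiset encodes a formal `ℕ`-linear combination of
elements of the group `F^×`, i.e. an element of the group semiring `ℕ[F^×]`). -/
structure TractOn (F : Type) [CommGroupWithZero F] where
  /-- The null set `N_F ⊆ ℕ[F^×]`. -/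
  N : Set (Multiset F)
  /-- Members of `N_F` are formal sums of elements of `F^× = F \ {0}`. -/
  not_zero_mem : ∀ S ∈ N, (0 : F) ∉ S
  /-- (T1) `0 ∈ N_F`. -/
  zero_mem : (0 : Multiset F) ∈ N
  /-- (T2) `1 ∉ N_F`. -/
  one_not_mem : ({1} : Multiset F) ∉ N
  /-- (T3) there is a unique `ε ∈ F^×` with `1 + ε ∈ N_F`. -/
  eps_exists : ∃! ε : F, ε ≠ 0 ∧ ({1, ε} : Multiset F) ∈ N
  /-- (T4) `N_F` is closed under multiplication by elements of `F^×`. -/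
  smul_mem : ∀ g : F, g ≠ 0 → ∀ S ∈ N, Multiset.map (fun a => g * a) S ∈ N

/-- The distinguished element `ε` (playing the role of `-1`) of a tract. -/
noncomputable def TractOn.eps {F : Type} [CommGroupWithZero F] (t : TractOn F) : F :=
  t.eps_exists.exists.choose

/-- A formal sum of (possibly zero) elements of `F` "sums to zero" in the tract `t`:
after discarding zero summands it lies in the null set. -/
def TractOn.Null {F : Type} [CommGroupWithZero F] (t : TractOn F) (S : Multiset F) : Prop :=
  Multiset.filter (fun x => x ≠ 0) S ∈ t.N

/-- The support of a vector `X ∈ F^E`. -/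
noncomputable def suppV {n : ℕ} {F : Type} [Zero F] (X : OE n → F) : Finset (OE n) :=
  Finset.univ.filter (fun e => X e ≠ 0)

/-- `X*`, defined by `X*(i) = X(i*)`. -/
def starV {n : ℕ} {F : Type} (X : OE n → F) : OE n → F := fun e => X (ostar e)

/-- `conj(X)`: apply the involution `σ` on the `[n]*`-coordinates only. -/
def conjV {n : ℕ} {F : Type} (σ : F → F) (X : OE n → F) : OE n → F :=
  fun e => if e.2 = true then X e else σ (X e)

/-- The formal sum of the `2n` terms of the inner product
`⟨X, Y⟩ = Σ_{i ∈ [n]} (X(i)·σ(Y(i)) + σ(X(i*))·Y(i*))`. -/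
def innerTerms {n : ℕ} {F : Type} [Mul F] (σ : F → F) (X Y : OE n → F) : Multiset F :=
  (Multiset.map (fun i : Fin n => X (i, true) * σ (Y (i, true))) Finset.univ.val) +
  (Multiset.map (fun i : Fin n => σ (X (i, false)) * Y (i, false)) Finset.univ.val)

/-- `X ⊥ Y` in the tract `t`: the inner product `⟨X, Y⟩` lies in the null set. -/
def OrthPair {n : ℕ} {F : Type} [CommGroupWithZero F] (t : TractOn F) (σ : F → F)
    (X Y : OE n → F) : Prop :=
  t.Null (innerTerms σ X Y)

/-- `σ` is an involution of the tract `t`. -/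
structure IsTractInvol {F : Type} [CommGroupWithZero F] (t : TractOn F) (σ : F → F) :
    Prop where
  invol : ∀ x, σ (σ x) = x
  map_one : σ 1 = 1
  map_mul : ∀ x y, σ (x * y) = σ x * σ y
  map_zero : σ (0 : F) = 0
  map_null : ∀ S ∈ t.N, Multiset.map σ S ∈ t.N

/-- `𝓒 ⊆ F^E` is an `F`-signature of the orthogonal matroid with bases `𝓑`: the supports of
its members are exactly the circuits, and it is closed under scaling by `F^×`. -/
def IsSignature {n : ℕ} {F : Type} [CommGroupWithZero F] (𝓑 : Set (Finset (OE n)))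
    (𝓒 : Set (OE n → F)) : Prop :=
  (∀ X ∈ 𝓒, IsCircuit 𝓑 (suppV X)) ∧
  (∀ C : Finset (OE n), IsCircuit 𝓑 C → ∃ X ∈ 𝓒, suppV X = C) ∧
  (∀ X ∈ 𝓒, ∀ α : F, α ≠ 0 → (fun e => α * X e) ∈ 𝓒)

/-- The 2-term orthogonality (O₂): `⟨X, Y*⟩ ∈ N_F` whenever `|supp X ∩ (supp Y)*| = 2`. -/
def TwoTermOrth {n : ℕ} {F : Type} [CommGroupWithZero F] (t : TractOn F) (σ : F → F)
    (𝓒 : Set (OE n → F)) : Prop :=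
  ∀ X ∈ 𝓒, ∀ Y ∈ 𝓒, (suppV X ∩ (suppV Y).image ostar).card = 2 →
    OrthPair t σ X (starV Y)

/-- The orthogonal complement `𝓒^⊥ = {X : ⟨X, Y*⟩ ∈ N_F for all Y ∈ 𝓒}`. -/
def perpSet {n : ℕ} {F : Type} [CommGroupWithZero F] (t : TractOn F) (σ : F → F)
    (𝓒 : Set (OE n → F)) : Set (OE n → F) :=
  {X | ∀ Y ∈ 𝓒, OrthPair t σ X (starV Y)}

/-- `X` is elementary in `𝓦 ⊆ F^E`: it is a nonzero member of `𝓦` with admissible support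
which is minimal among the supports of nonzero members of `𝓦`. -/
def IsElem {n : ℕ} {F : Type} [Zero F] (𝓦 : Set (OE n → F)) (X : OE n → F) : Prop :=
  X ∈ 𝓦 ∧ X ≠ 0 ∧ IsAdmissible (suppV X) ∧
  ∀ Y ∈ 𝓦, Y ≠ 0 → suppV Y ⊆ suppV X → suppV Y = suppV X

section AuxDev

open Finset

variable {n : ℕ} {F : Type} [CommGroupWithZero F]

/- ### Basic facts about the involution -/

lemma ostar_ostar (x : OE n) : ostar (ostar x) = x := by
  simp [ostar]

lemma ostar_ne (x : OE n) : ostar x ≠ x := by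
  simp [ostar, Prod.ext_iff]

lemma ostar_inj {x y : OE n} (h : ostar x = ostar y) : x = y := by
  rw [← ostar_ostar x, h, ostar_ostar]

lemma mem_pairS {x y : OE n} : y ∈ pairS x ↔ y = x ∨ y = ostar x := by
  simp [pairS]

lemma pairS_ostar (x : OE n) : pairS (ostar x) = pairS x := by
  unfold pairS
  rw [ostar_ostar, Finset.pair_comm]

lemma adm_subset {A B : Finset (OE n)} (h : A ⊆ B) (hB : IsAdmissible B) : IsAdmissible A :=
  fun x hx hx' => hB x (h hx) (h hx')

/- ### The flipped transversal -/

lemma flip_eq {B : Finset (OE n)} {e : OE n} (hB : IsTransversal B) (he : e ∈ B) :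
    symmDiff B (pairS e) = insert (ostar e) (B.erase e) := by
  have hstar : ostar e ∉ B := hB.2 e he
  ext x
  rw [Finset.mem_symmDiff]
  simp only [mem_pairS, Finset.mem_insert, Finset.mem_erase]
  constructor
  · rintro (⟨hxB, hx⟩ | ⟨(rfl | rfl), hxB⟩)
    · right; exact ⟨fun h => hx (Or.inl h), hxB⟩
    · exact absurd he hxB
    · left; rfl
  · rintro (rfl | ⟨hxe, hxB⟩)
    · right; exact ⟨Or.inr rfl, hstar⟩
    · left
      refine ⟨hxB, ?_⟩
      rintro (rfl | rfl)
      · exact hxe rfl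
      · exact hstar hxB

lemma flip_transversal {B : Finset (OE n)} {e : OE n} (hB : IsTransversal B) (he : e ∈ B) :
    IsTransversal (insert (ostar e) (B.erase e)) := by
  have hstar : ostar e ∉ B := hB.2 e he
  have hni : ostar e ∉ B.erase e := fun h => hstar (Finset.mem_of_mem_erase h)
  constructor
  · rw [Finset.card_insert_of_notMem hni, Finset.card_erase_of_mem he, hB.1]
    have hn : 0 < n := by
      rw [← hB.1]
      exact Finset.card_pos.mpr ⟨e, he⟩
    omega
  · intro x hx
    rcases Finset.mem_insert.mp hx with rfl | hx'
    · rw [ostar_ostar]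
      intro h
      rcases Finset.mem_insert.mp h with h' | h'
      · exact ostar_ne e h'.symm
      · exact (Finset.mem_erase.mp h').1 rfl
    · intro h
      have hxB := Finset.mem_of_mem_erase hx'
      rcases Finset.mem_insert.mp h with h' | h'
      · exact (Finset.mem_erase.mp hx').1 (ostar_inj h')
      · exact hB.2 x hxB (Finset.mem_of_mem_erase h')

/- ### Matroid lemmas -/

lemma indep_empty {𝓑 : Set (Finset (OE n))} (h : 𝓑.Nonempty) : IsIndep 𝓑 ∅ :=
  let ⟨B, hB⟩ := h; ⟨B, hB, Finset.empty_subset B⟩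

lemma circuit_nonempty {𝓑 : Set (Finset (OE n))} (hOM : IsOrthoMatroid 𝓑)
    {C : Finset (OE n)} (hC : IsCircuit 𝓑 C) : C.Nonempty := by
  rcases Finset.eq_empty_or_nonempty C with rfl | h
  · exact absurd (indep_empty hOM.1) hC.2.1
  · exact h

lemma flip_not_base {𝓑 : Set (Finset (OE n))} (hOM : IsOrthoMatroid 𝓑)
    {B : Finset (OE n)} (hB : B ∈ 𝓑) (e : OE n) : symmDiff B (pairS e) ∉ 𝓑 := by
  intro hT
  have hd : symmDiff B (symmDiff B (pairS e)) = pairS e := symmDiff_symmDiff_cancel_left B (pairS e)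
  obtain ⟨y, hy, -, hne, -⟩ := hOM.2.2 B hB _ hT e
    (by rw [hd]; exact mem_pairS.mpr (Or.inl rfl))
    (by rw [hd]; exact mem_pairS.mpr (Or.inr rfl))
  rw [hd] at hy
  rcases mem_pairS.mp hy with rfl | rfl
  · exact hne rfl
  · exact hne (pairS_ostar e)

lemma exists_circuit {𝓑 : Set (Finset (OE n))} (hOM : IsOrthoMatroid 𝓑) :
    ∀ (k : ℕ) (A : Finset (OE n)), A.card ≤ k → IsAdmissible A → ¬ IsIndep 𝓑 A →
      ∃ C, C ⊆ A ∧ IsCircuit 𝓑 C := by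
  intro k
  induction k with
  | zero =>
    intro A hk hadm hdep
    have hA : A = ∅ := Finset.card_eq_zero.mp (Nat.le_zero.mp hk)
    rw [hA] at hdep
    exact absurd (indep_empty hOM.1) hdep
  | succ k ih =>
    intro A hk hadm hdep
    by_cases h : ∀ D ⊂ A, IsIndep 𝓑 D
    · exact ⟨A, Finset.Subset.refl A, hadm, hdep, h⟩
    · push_neg at h
      obtain ⟨D, hDA, hDdep⟩ := h
      obtain ⟨C, hCD, hC⟩ := ih D
        (by have := Finset.card_lt_card hDA; omega)
        (adm_subset hDA.subset hadm) hDdep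
      exact ⟨C, hCD.trans hDA.subset, hC⟩

lemma fund_circuit {𝓑 : Set (Finset (OE n))} (hOM : IsOrthoMatroid 𝓑)
    {B : Finset (OE n)} {e : OE n} (hB : B ∈ 𝓑) (he : e ∈ B) :
    ∃ Z, IsCircuit 𝓑 Z ∧ ostar e ∈ Z ∧ ∀ x ∈ Z, x = ostar e ∨ (x ∈ B ∧ x ≠ e) := by
  have hTr := hOM.2.1 B hB
  have heq := flip_eq hTr he
  have hTtr : IsTransversal (insert (ostar e) (B.erase e)) := flip_transversal hTr he
  have hTnot : insert (ostar e) (B.erase e) ∉ 𝓑 := by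
    rw [← heq]; exact flip_not_base hOM hB e
  have hTdep : ¬ IsIndep 𝓑 (insert (ostar e) (B.erase e)) := by
    rintro ⟨B', hB', hsub⟩
    have hTB : insert (ostar e) (B.erase e) = B' :=
      Finset.eq_of_subset_of_card_le hsub (by rw [hTtr.1, (hOM.2.1 B' hB').1])
    exact hTnot (hTB ▸ hB')
  obtain ⟨Z, hZT, hZ⟩ := exists_circuit hOM (insert (ostar e) (B.erase e)).card _
    le_rfl hTtr.2 hTdep
  have hmem : ∀ x ∈ Z, x = ostar e ∨ (x ∈ B ∧ x ≠ e) := by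
    intro x hx
    rcases Finset.mem_insert.mp (hZT hx) with h | h
    · exact Or.inl h
    · exact Or.inr ⟨Finset.mem_of_mem_erase h, (Finset.mem_erase.mp h).1⟩
  have hstar : ostar e ∈ Z := by
    by_contra hns
    have hZB : Z ⊆ B := by
      intro x hx
      rcases hmem x hx with rfl | h
      · exact absurd hx hns
      · exact h.1
    exact hZ.2.1 ⟨B, hB, hZB⟩
  exact ⟨Z, hZ, hstar, hmem⟩

/- ### Tract and vector lemmas -/

lemma mem_suppV {X : OE n → F} {e : OE n} : e ∈ suppV X ↔ X e ≠ 0 := by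
  simp [suppV]

lemma sigma_ne {t : TractOn F} {σ : F → F} (hσ : IsTractInvol t σ) {x : F} :
    σ x ≠ 0 ↔ x ≠ 0 := by
  constructor
  · intro h hx
    exact h (by rw [hx, hσ.map_zero])
  · intro hx h
    apply hx
    rw [← hσ.invol x, h, hσ.map_zero]

/-- The term of the inner product `⟨X, V*⟩` located at position `e`. -/
def termF (σ : F → F) (X V : OE n → F) (e : OE n) : F :=
  if e.2 = true then X e * σ (V (ostar e)) else σ (X e) * V (ostar e)

lemma termF_nz_iff {t : TractOn F} {σ : F → F} (hσ : IsTractInvol t σ)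
    {X V : OE n → F} {e : OE n} :
    termF σ X V e ≠ 0 ↔ (X e ≠ 0 ∧ V (ostar e) ≠ 0) := by
  unfold termF
  split
  · rw [mul_ne_zero_iff, sigma_ne hσ]
  · rw [mul_ne_zero_iff, sigma_ne hσ]

lemma termF_ne_zero {t : TractOn F} {σ : F → F} (hσ : IsTractInvol t σ)
    {X V : OE n → F} {e : OE n} (hX : X e ≠ 0) (hV : V (ostar e) ≠ 0) :
    termF σ X V e ≠ 0 := (termF_nz_iff (t := t) hσ).mpr ⟨hX, hV⟩

lemma not_null_singleton (t : TractOn F) {a : F} (ha : a ≠ 0) :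
    ({a} : Multiset F) ∉ t.N := by
  intro h
  have h2 := t.smul_mem a⁻¹ (inv_ne_zero ha) _ h
  rw [Multiset.map_singleton, inv_mul_cancel₀ ha] at h2
  exact t.one_not_mem h2

lemma null_pair_eq (t : TractOn F) {a b b' : F} (ha : a ≠ 0) (hb : b ≠ 0) (hb' : b' ≠ 0)
    (h : ({a, b} : Multiset F) ∈ t.N) (h' : ({a, b'} : Multiset F) ∈ t.N) : b = b' := by
  obtain ⟨ε, hε, huniq⟩ := t.eps_exists
  have key : ∀ c : F, c ≠ 0 → ({a, c} : Multiset F) ∈ t.N → a⁻¹ * c = ε := by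
    intro c hc hm
    refine huniq _ ⟨mul_ne_zero (inv_ne_zero ha) hc, ?_⟩
    have h2 := t.smul_mem a⁻¹ (inv_ne_zero ha) _ hm
    have hmap : Multiset.map (fun x => a⁻¹ * x) ({a, c} : Multiset F)
        = ({1, a⁻¹ * c} : Multiset F) := by
      simp [Multiset.insert_eq_cons, inv_mul_cancel₀ ha]
    rwa [hmap] at h2
  have hbc := (key b hb h).trans (key b' hb' h').symm
  exact mul_left_cancel₀ (inv_ne_zero ha) hbc

/- ### Computation of the filtered inner product -/

lemma inner_filter (t : TractOn F) {σ : F → F} (hσ : IsTractInvol t σ)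
    (X V : OE n → F) (A : Finset (OE n))
    (hA : ∀ e : OE n, (X e ≠ 0 ∧ V (ostar e) ≠ 0) ↔ e ∈ A) :
    Multiset.filter (fun x => x ≠ 0) (innerTerms σ X (starV V)) =
      Multiset.map (termF σ X V) A.val := by
  classical
  have hIT : innerTerms σ X (starV V) =
      Multiset.map (fun i : Fin n => termF σ X V (i, true)) Finset.univ.val +
      Multiset.map (fun i : Fin n => termF σ X V (i, false)) Finset.univ.val := rfl
  rw [hIT, Multiset.filter_add]
  have key : ∀ b : Bool,
      Multiset.filter (fun x => x ≠ 0)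
          (Multiset.map (fun i : Fin n => termF σ X V (i, b)) Finset.univ.val) =
        Multiset.map (termF σ X V) ((A.filter (fun e => e.2 = b)).val) := by
    intro b
    rw [Multiset.filter_map]
    have h2 : Multiset.filter ((fun x => x ≠ 0) ∘ fun i : Fin n => termF σ X V (i, b))
        Finset.univ.val
        = Multiset.map Prod.fst ((A.filter (fun e => e.2 = b)).val) := by
      refine (Multiset.Nodup.ext ?_ ?_).mpr ?_
      · exact Multiset.Nodup.filter _ Finset.univ.nodup
      · refine Multiset.Nodup.map_on ?_ (A.filter (fun e => e.2 = b)).nodup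
        intro x hx y hy hxy
        have hxb : x.2 = b := (Finset.mem_filter.mp (Finset.mem_val.mp hx)).2
        have hyb : y.2 = b := (Finset.mem_filter.mp (Finset.mem_val.mp hy)).2
        exact Prod.ext hxy (hxb.trans hyb.symm)
      · intro i
        rw [Multiset.mem_filter]
        constructor
        · rintro ⟨-, hterm⟩
          have hterm' : termF σ X V (i, b) ≠ 0 := hterm
          have hiA : ((i, b) : OE n) ∈ A := (hA _).mp ((termF_nz_iff (t := t) hσ).mp hterm')
          exact Multiset.mem_map.mpr
            ⟨(i, b), Finset.mem_val.mpr (Finset.mem_filter.mpr ⟨hiA, rfl⟩), rfl⟩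
        · intro hi
          obtain ⟨x, hx, hxi⟩ := Multiset.mem_map.mp hi
          obtain ⟨hxA, hxb⟩ := Finset.mem_filter.mp (Finset.mem_val.mp hx)
          have hxe : x = (i, b) := Prod.ext hxi hxb
          refine ⟨Finset.mem_val.mpr (Finset.mem_univ i), ?_⟩
          show termF σ X V (i, b) ≠ 0
          exact (termF_nz_iff (t := t) hσ).mpr ((hA _).mpr (hxe ▸ hxA))
    rw [h2, Multiset.map_map]
    apply Multiset.map_congr rfl
    intro x hx
    have hxb : x.2 = b := (Finset.mem_filter.mp (Finset.mem_val.mp hx)).2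
    show termF σ X V (x.1, b) = termF σ X V x
    rw [← hxb]
  rw [key true, key false, ← Multiset.map_add]
  congr 1
  rw [Finset.filter_val, Finset.filter_val]
  calc A.val.filter (fun e => e.2 = true) + A.val.filter (fun e => e.2 = false)
      = A.val.filter (fun e => e.2 = true) + A.val.filter (fun e => ¬ e.2 = true) := by
        congr 1
        apply Multiset.filter_congr
        intro x _
        cases hx : x.2 <;> simp
    _ = A.val := Multiset.filter_add_not _ _

/- ### Orthogonality consequences -/

lemma orth_singleton {t : TractOn F} {σ : F → F} (hσ : IsTractInvol t σ)
    {X V : OE n → F} {e : OE n}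
    (ho : t.Null (innerTerms σ X (starV V)))
    (h : ∀ e' : OE n, (X e' ≠ 0 ∧ V (ostar e') ≠ 0) ↔ e' = e) : False := by
  have hA : ∀ e' : OE n, (X e' ≠ 0 ∧ V (ostar e') ≠ 0) ↔ e' ∈ ({e} : Finset (OE n)) := by
    simpa using h
  have hfilter := inner_filter t hσ X V {e} hA
  unfold TractOn.Null at ho
  rw [hfilter, Finset.singleton_val, Multiset.map_singleton] at ho
  have he := (h e).mpr rfl
  exact not_null_singleton t (termF_ne_zero hσ he.1 he.2) ho

lemma orth_pair {t : TractOn F} {σ : F → F} (hσ : IsTractInvol t σ)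
    {X V : OE n → F} {e f : OE n} (hef : e ≠ f)
    (ho : t.Null (innerTerms σ X (starV V)))
    (h : ∀ e' : OE n, (X e' ≠ 0 ∧ V (ostar e') ≠ 0) ↔ (e' = e ∨ e' = f)) :
    ({termF σ X V e, termF σ X V f} : Multiset F) ∈ t.N := by
  have hA : ∀ e' : OE n, (X e' ≠ 0 ∧ V (ostar e') ≠ 0) ↔ e' ∈ ({e, f} : Finset (OE n)) := by
    simpa using h
  have hfilter := inner_filter t hσ X V {e, f} hA
  unfold TractOn.Null at ho
  have hval : ({e, f} : Finset (OE n)).val = e ::ₘ ({f} : Multiset (OE n)) := by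
    rw [Finset.insert_val_of_notMem (by simp [hef])]
    rfl
  rw [hfilter, hval, Multiset.map_cons, Multiset.map_singleton] at ho
  simpa [Multiset.insert_eq_cons] using ho

/- ### Key lemma: supports of nonzero perp vectors are dependent -/

lemma perp_support_dep {t : TractOn F} {σ : F → F} (hσ : IsTractInvol t σ)
    {𝓑 : Set (Finset (OE n))} (hOM : IsOrthoMatroid 𝓑)
    {𝓒 : Set (OE n → F)} (hsig : IsSignature 𝓑 𝓒) {Y : OE n → F}
    (hperp : Y ∈ perpSet t σ 𝓒) (hY : Y ≠ 0) (hind : IsIndep 𝓑 (suppV Y)) : False := by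
  obtain ⟨e, he⟩ := Function.ne_iff.mp hY
  have heY : Y e ≠ 0 := by simpa using he
  obtain ⟨B, hB, hSB⟩ := hind
  have heB : e ∈ B := hSB (mem_suppV.mpr heY)
  obtain ⟨Z, hZ, hZstar, hZmem⟩ := fund_circuit hOM hB heB
  obtain ⟨V, hV𝓒, hVZ⟩ := hsig.2.1 Z hZ
  have ho := hperp V hV𝓒
  apply orth_singleton hσ ho
  intro e'
  constructor
  · rintro ⟨hX', hV'⟩
    have he'B : e' ∈ B := hSB (mem_suppV.mpr hX')
    have hZ' : ostar e' ∈ Z := by rw [← hVZ]; exact mem_suppV.mpr hV'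
    rcases hZmem _ hZ' with h1 | h2
    · exact ostar_inj h1
    · exact absurd h2.1 ((hOM.2.1 B hB).2 e' he'B)
  · rintro rfl
    refine ⟨heY, mem_suppV.mp ?_⟩
    rw [hVZ]
    exact hZstar

/- ### Key lemma: proportionality on a common circuit support -/

lemma agree_step {t : TractOn F} {σ : F → F} (hσ : IsTractInvol t σ)
    {𝓑 : Set (Finset (OE n))} (hOM : IsOrthoMatroid 𝓑)
    {𝓒 : Set (OE n → F)} (hsig : IsSignature 𝓑 𝓒)
    {X W' : OE n → F} (hXp : X ∈ perpSet t σ 𝓒) (hWp : W' ∈ perpSet t σ 𝓒)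
    (hsupp : suppV W' = suppV X) (hcirc : IsCircuit 𝓑 (suppV X))
    {e₀ f : OE n} (he₀ : e₀ ∈ suppV X) (hf : f ∈ suppV X) (hne : f ≠ e₀)
    (he₀val : W' e₀ = X e₀) : X f = W' f := by
  have herase : (suppV X).erase f ⊂ suppV X := Finset.erase_ssubset hf
  obtain ⟨B, hB, hsub⟩ := hcirc.2.2 _ herase
  have hfB : f ∉ B := by
    intro hfB
    apply hcirc.2.1
    refine ⟨B, hB, fun x hx => ?_⟩
    rcases eq_or_ne x f with rfl | hxf
    · exact hfB
    · exact hsub (Finset.mem_erase.mpr ⟨hxf, hx⟩)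
  have he₀B : e₀ ∈ B := hsub (Finset.mem_erase.mpr ⟨Ne.symm hne, he₀⟩)
  obtain ⟨Z, hZ, hZstar, hZmem⟩ := fund_circuit hOM hB he₀B
  obtain ⟨V, hV𝓒, hVZ⟩ := hsig.2.1 Z hZ
  have hoX := hXp V hV𝓒
  have hoW := hWp V hV𝓒
  have hXe₀ : X e₀ ≠ 0 := mem_suppV.mp he₀
  have hXf : X f ≠ 0 := mem_suppV.mp hf
  have hVe₀ : V (ostar e₀) ≠ 0 := mem_suppV.mp (by rw [hVZ]; exact hZstar)
  have fwd : ∀ U : OE n → F, suppV U = suppV X →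
      ∀ e' : OE n, U e' ≠ 0 → V (ostar e') ≠ 0 → e' = e₀ ∨ e' = f := by
    intro U hU e' hU' hV'
    have he'S : e' ∈ suppV X := by rw [← hU]; exact mem_suppV.mpr hU'
    have hZ' : ostar e' ∈ Z := by rw [← hVZ]; exact mem_suppV.mpr hV'
    rcases eq_or_ne e' f with rfl | hxf
    · exact Or.inr rfl
    · left
      have he'B : e' ∈ B := hsub (Finset.mem_erase.mpr ⟨hxf, he'S⟩)
      rcases hZmem _ hZ' with h1 | h2
      · exact ostar_inj h1
      · exact absurd h2.1 ((hOM.2.1 B hB).2 e' he'B)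
  have hVf : V (ostar f) ≠ 0 := by
    by_contra hVf
    apply orth_singleton hσ hoX
    intro e'
    constructor
    · rintro ⟨h1, h2⟩
      rcases fwd X rfl e' h1 h2 with h | rfl
      · exact h
      · exact absurd h2 (by simpa using hVf)
    · rintro rfl
      exact ⟨hXe₀, hVe₀⟩
  have hiff : ∀ U : OE n → F, suppV U = suppV X →
      ∀ e' : OE n, (U e' ≠ 0 ∧ V (ostar e') ≠ 0) ↔ (e' = e₀ ∨ e' = f) := by
    intro U hU e'
    constructor
    · rintro ⟨h1, h2⟩
      exact fwd U hU e' h1 h2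
    · have hUe₀ : U e₀ ≠ 0 := mem_suppV.mp (by rw [hU]; exact he₀)
      have hUf : U f ≠ 0 := mem_suppV.mp (by rw [hU]; exact hf)
      rintro (rfl | rfl)
      exacts [⟨hUe₀, hVe₀⟩, ⟨hUf, hVf⟩]
  have hne' : e₀ ≠ f := Ne.symm hne
  have hpX := orth_pair hσ hne' hoX (hiff X rfl)
  have hpW := orth_pair hσ hne' hoW (hiff W' hsupp)
  have hterm_e₀ : termF σ W' V e₀ = termF σ X V e₀ := by
    unfold termF
    rw [he₀val]
  rw [hterm_e₀] at hpW
  have haz : termF σ X V e₀ ≠ 0 := termF_ne_zero hσ hXe₀ hVe₀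
  have hbz : termF σ X V f ≠ 0 := termF_ne_zero hσ hXf hVf
  have hWf : W' f ≠ 0 := mem_suppV.mp (by rw [hsupp]; exact hf)
  have hbz' : termF σ W' V f ≠ 0 := termF_ne_zero hσ hWf hVf
  have heq := null_pair_eq t haz hbz hbz' hpX hpW
  unfold termF at heq
  by_cases hb : f.2 = true
  · rw [if_pos hb, if_pos hb] at heq
    exact mul_right_cancel₀ ((sigma_ne hσ).mpr hVf) heq
  · rw [if_neg hb, if_neg hb] at heq
    have hss := mul_right_cancel₀ hVf heq
    calc X f = σ (σ (X f)) := (hσ.invol _).symm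
      _ = σ (σ (W' f)) := by rw [hss]
      _ = W' f := hσ.invol _

end AuxDev

/-- If `𝓒` is a strong orthogonal `F`-signature of an orthogonal matroid, then the elementary
vectors of the orthogonal complement `𝓒^⊥` are exactly the members of `𝓒`:
`Elem(𝓒^⊥) = 𝓒`. -/
theorem elem_perp_eq_signature {n : ℕ} {F : Type} [CommGroupWithZero F]
    (t : TractOn F) (σ : F → F) (hσ : IsTractInvol t σ)
    (𝓑 : Set (Finset (OE n))) (h𝓑 : IsOrthoMatroid 𝓑)
    (𝓒 : Set (OE n → F)) (hsig : IsSignature 𝓑 𝓒)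
    (horth : ∀ X ∈ 𝓒, ∀ Y ∈ 𝓒, OrthPair t σ X (starV Y)) :
    {X : OE n → F | IsElem (perpSet t σ 𝓒) X} = 𝓒 := by
  ext X
  simp only [Set.mem_setOf_eq]
  constructor
  · rintro ⟨hXp, hX0, hadm, hmin⟩
    have hdep : ¬ IsIndep 𝓑 (suppV X) :=
      fun h => perp_support_dep hσ h𝓑 hsig hXp hX0 h
    obtain ⟨C, hCS, hC⟩ := exists_circuit h𝓑 (suppV X).card (suppV X) le_rfl hadm hdep
    obtain ⟨W, hW𝓒, hWC⟩ := hsig.2.1 C hC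
    have hWp : W ∈ perpSet t σ 𝓒 := fun Y hY => horth W hW𝓒 Y hY
    have hW0 : W ≠ 0 := by
      obtain ⟨c, hc⟩ := circuit_nonempty h𝓑 hC
      intro h0
      have hWc : W c ≠ 0 := mem_suppV.mp (by rw [hWC]; exact hc)
      rw [h0] at hWc
      exact hWc rfl
    have hWS : suppV W = suppV X := hmin W hWp hW0 (by rw [hWC]; exact hCS)
    have hScirc : IsCircuit 𝓑 (suppV X) := by
      rw [← hWS, hWC]
      exact hC
    obtain ⟨e₀, he₀⟩ := circuit_nonempty h𝓑 hScirc
    have hXe₀ : X e₀ ≠ 0 := mem_suppV.mp he₀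
    have hWe₀ : W e₀ ≠ 0 := mem_suppV.mp (by rw [hWS]; exact he₀)
    have hα0 : X e₀ * (W e₀)⁻¹ ≠ 0 := mul_ne_zero hXe₀ (inv_ne_zero hWe₀)
    have hW' : (fun e => (X e₀ * (W e₀)⁻¹) * W e) ∈ 𝓒 := hsig.2.2 W hW𝓒 _ hα0
    have hW'supp : suppV (fun e => (X e₀ * (W e₀)⁻¹) * W e) = suppV X := by
      rw [← hWS]
      ext x
      simp [suppV, hα0]
    have hW'e₀ : (fun e => (X e₀ * (W e₀)⁻¹) * W e) e₀ = X e₀ := by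
      show X e₀ * (W e₀)⁻¹ * W e₀ = X e₀
      rw [mul_assoc, inv_mul_cancel₀ hWe₀, mul_one]
    have hW'p : (fun e => (X e₀ * (W e₀)⁻¹) * W e) ∈ perpSet t σ 𝓒 :=
      fun Y hY => horth _ hW' Y hY
    have hXW : X = fun e => (X e₀ * (W e₀)⁻¹) * W e := by
      funext f
      by_cases hfS : f ∈ suppV X
      · rcases eq_or_ne f e₀ with rfl | hfe
        · exact hW'e₀.symm
        · exact agree_step hσ h𝓑 hsig hXp hW'p hW'supp hScirc he₀ hfS hfe hW'e₀
      · have h1 : X f = 0 := by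
          by_contra h
          exact hfS (mem_suppV.mpr h)
        have h2 : (X e₀ * (W e₀)⁻¹) * W f = 0 := by
          by_contra h
          exact hfS (hW'supp ▸ mem_suppV.mpr h)
        rw [h1, h2]
    rw [hXW]
    exact hW'
  · intro hX𝓒
    have hC := hsig.1 X hX𝓒
    refine ⟨fun Y hY => horth X hX𝓒 Y hY, ?_, hC.1, ?_⟩
    · obtain ⟨c, hc⟩ := circuit_nonempty h𝓑 hC
      intro h0
      have hXc := mem_suppV.mp hc
      rw [h0] at hXc
      exact hXc rfl
    · intro Y hYp hY0 hsub
      by_contra hne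
      have hss : suppV Y ⊂ suppV X := Finset.ssubset_iff_subset_ne.mpr ⟨hsub, hne⟩
      exact perp_support_dep hσ h𝓑 hsig hYp hY0 (hC.2.2 _ hss)
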